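/- arXiv:1108.1419 — 2 statements merged into one kernel-verified Lean document; each statement's English description precedes it below -/
import Mathlib

section
/- Let A = {0, 1, …, s-1} with s ≥ 2, let R be a finite set of local rules on A all of radius r > 0, and let θ : ℤ → R be a distribution. Then H_θ is number-conserving if and only if for every j ∈ ℤ the word θ_{[j-2r, j]} does not belong to F_R, where F_R = { ψ ∈ R^{2r+1} : there exists u ∈ A^{2r+1} with ψ_{2r}(u) ≠ u_0 + Σ_{i=0}^{2r-1} [ ψ_{i+1}(0^{2r-i} u_{[1,i+1]}) − ψ_i(0^{2r-i} u_{[0,i]}) ] }. -/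
open Filter

/-- The r-ν-CA on the alphabet `A = {0, …, s-1}` induced by the distribution
`θ : ℤ → R`, where `rule ρ` is the local rule of radius `r` indexed by `ρ ∈ R`. -/
def nuCA (s r : ℕ) {R : Type*} (rule : R → (Fin (2 * r + 1) → Fin s) → Fin s)
    (θ : ℤ → R) (x : ℤ → Fin s) : ℤ → Fin s :=
  fun i => rule (θ i) (fun k => x (i - (r : ℤ) + (k : ℕ)))

/-- `H` is number-conserving: `H(0̄) = 0̄` and for every configuration `x ≠ 0̄`
the ratio of partial charges `μ_n(H(x))/μ_n(x)` converges to 1. -/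
def IsNC (s : ℕ) [NeZero s] (H : (ℤ → Fin s) → (ℤ → Fin s)) : Prop :=
  H 0 = 0 ∧ ∀ x : ℤ → Fin s, x ≠ 0 →
    Tendsto (fun n : ℕ =>
        ((∑ i ∈ Finset.Icc (-(n : ℤ)) (n : ℤ), ((H x i : ℕ))) : ℝ) /
        ((∑ i ∈ Finset.Icc (-(n : ℤ)) (n : ℤ), ((x i : ℕ))) : ℝ))
      atTop (nhds 1)

/-!
Write `x^{≥a}` for `x` with every cell left of `a` set to `0`, and call
`Φ(x, j) = ∑_{j-2r ≤ c < j} H(x^{≥j-r})_c`, the part of the image of `x^{≥j-r}` that lands left of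
`j`, the flux through `j`. For the window `u = x_{[j-r, j+r]}` the identity of the theorem is the
balance law `H(x)_j = x_{j-r} + Φ(x, j+1) - Φ(x, j)`.

If `H` is number-conserving, conservation for the finite configuration `x^{≥j-r}` gives
`Φ(x, j) = ∑_{i ≥ j-r} x_i - ∑_{c ≥ j} H(x)_c` for finite `x`, and comparing `j` with `j + 1` yields
the balance law. Conversely, summed over `[-n, n]` the balance law telescopes: `μ_n(H x) - μ_n(x)`
is a difference of two boundary terms bounded by `2rs`; they vanish for large `n` when `x` is
finite, and are negligible against `μ_n(x) → ∞` otherwise.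
-/

open Finset

lemma sum_Ico_add_one_sub_sum_Ico {G : Type*} [AddCommGroup G] (f : ℤ → G) {a b : ℤ}
    (h : a ≤ b) : ∑ i ∈ Ico (a + 1) (b + 1), f i - ∑ i ∈ Ico a b, f i = f b - f a := by
  rw [Ico_add_one_add_one_eq_Ioc, sub_eq_sub_iff_add_eq_add, sum_Ioc_add_eq_sum_Icc h,
    add_sum_Ico_eq_sum_Icc h]

lemma sum_Ico_sub_of_le {G : Type*} [AddCommGroup G] (f : ℤ → G) {a b : ℤ} (h : a ≤ b) :
    ∑ i ∈ Ico a b, (f (i + 1) - f i) = f b - f a := by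
  rw [sum_sub_distrib, sum_Ico_add', sum_Ico_add_one_sub_sum_Ico f h]

lemma sum_Ico_add_sum_Icc {M : Type*} [AddCommMonoid M] (f : ℤ → M) {a b c : ℤ}
    (hab : a ≤ b) (hbc : b ≤ c + 1) :
    ∑ i ∈ Ico a b, f i + ∑ i ∈ Icc b c, f i = ∑ i ∈ Icc a c, f i := by
  rw [← Ico_add_one_right_eq_Icc, ← Ico_add_one_right_eq_Icc,
    ← sum_union (Ico_disjoint_Ico_consecutive _ _ _), Ico_union_Ico_eq_Ico hab hbc]

lemma sum_fin_eq_sum_Ico {M : Type*} [AddCommMonoid M] (f : ℤ → M) (a : ℤ) (n : ℕ) :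
    ∑ i : Fin n, f (a + i) = ∑ c ∈ Ico a (a + n), f c := by
  rw [Fin.sum_univ_eq_sum_range (fun i => f (a + i))]
  refine sum_nbij' (fun i => a + i) (fun c => (c - a).toNat) ?_ ?_ ?_ ?_ ?_ <;>
    intro t ht <;> simp only [mem_Ico, mem_range] at * <;> omega

lemma sum_Ico_val_le {s : ℕ} (f : ℤ → Fin s) {a b : ℤ} (h : a ≤ b) :
    ∑ i ∈ Ico a b, ((f i : ℕ) : ℤ) ≤ (b - a) * s := by
  have hcard : (#(Ico a b) : ℤ) = b - a := by rw [Int.card_Ico]; omega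
  calc ∑ i ∈ Ico a b, ((f i : ℕ) : ℤ) ≤ #(Ico a b) • (s : ℤ) :=
        sum_le_card_nsmul _ _ _ fun i _ => by have := (f i).isLt; omega
    _ = (b - a) * s := by rw [nsmul_eq_mul, hcard]

lemma tendsto_div_of_abs_sub_le {a b : ℕ → ℝ} (hb : Tendsto b atTop atTop) (C : ℝ)
    (h : ∀ n, |a n - b n| ≤ C) : Tendsto (fun n => a n / b n) atTop (nhds 1) := by
  have hne : ∀ᶠ n in atTop, b n ≠ 0 := (hb.eventually_gt_atTop 0).mono fun n hn => hn.ne'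
  refine (Asymptotics.isEquivalent_iff_tendsto_one hne).1 ?_
  have hbdd : (a - b) =O[atTop] (fun _ => (1 : ℝ)) :=
    Asymptotics.isBigO_of_le' (c := C) _ fun n => by simpa using h n
  exact hbdd.trans_isLittleO
    ((Asymptotics.isLittleO_one_left_iff ℝ).2 (tendsto_norm_atTop_atTop.comp hb))

section Charge

variable {s : ℕ}

noncomputable def charge (x : ℤ → Fin s) (n : ℕ) : ℤ :=
  ∑ i ∈ Icc (-(n : ℤ)) n, ((x i : ℕ) : ℤ)

lemma isNC_iff_charge [NeZero s] {H : (ℤ → Fin s) → (ℤ → Fin s)} :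
    IsNC s H ↔ H 0 = 0 ∧ ∀ x : ℤ → Fin s, x ≠ 0 →
      Tendsto (fun n => (charge (H x) n : ℝ) / charge x n) atTop (nhds 1) := by
  simp [IsNC, charge]

lemma charge_mono (x : ℤ → Fin s) : Monotone (charge x) := fun m n hmn =>
  sum_le_sum_of_subset_of_nonneg (Icc_subset_Icc (by omega) (by omega)) fun _ _ _ => by positivity

lemma single_le_charge (x : ℤ → Fin s) {i : ℤ} {n : ℕ} (hi : i.natAbs ≤ n) :
    ((x i : ℕ) : ℤ) ≤ charge x n :=
  single_le_sum (f := fun i => ((x i : ℕ) : ℤ)) (fun _ _ => by positivity)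
    (mem_Icc.2 ⟨by omega, by omega⟩)

variable [NeZero s]

lemma charge_eq_of_le {x : ℤ → Fin s} {N n : ℕ} (hx : ∀ i, N < i.natAbs → x i = 0)
    (hn : N ≤ n) : charge x n = charge x N := by
  refine (sum_subset (Icc_subset_Icc (by omega) (by omega)) fun i hi hiN => ?_).symm
  simp only [mem_Icc] at hi hiN
  simp [hx i (by omega)]

lemma eventually_charge_pos {x : ℤ → Fin s} (hx : x ≠ 0) : ∀ᶠ n in atTop, 0 < charge x n := by
  obtain ⟨i, hi⟩ := Function.ne_iff.1 hx
  have hxi : (x i : ℕ) ≠ 0 := fun h => hi (Fin.ext h)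
  filter_upwards [eventually_ge_atTop i.natAbs] with n hn
  have := single_le_charge x hn
  omega

lemma tendsto_charge_atTop {x : ℤ → Fin s} (hx : ∀ N : ℕ, ∃ i, N < i.natAbs ∧ x i ≠ 0) :
    Tendsto (charge x) atTop atTop := by
  have hunbdd : ∀ k : ℕ, ∃ n, (k : ℤ) ≤ charge x n := by
    intro k
    induction k with
    | zero => exact ⟨0, sum_nonneg fun _ _ => by positivity⟩
    | succ k ih =>
      obtain ⟨n, hn⟩ := ih
      obtain ⟨i, hni, hi⟩ := hx n
      have hxi : (x i : ℕ) ≠ 0 := fun h => hi (Fin.ext h)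
      have hgrow : ((x i : ℕ) : ℤ) + charge x n ≤ charge x i.natAbs := by
        rw [charge, charge, ← sum_insert (f := fun t => ((x t : ℕ) : ℤ))
          (by simp only [mem_Icc]; omega)]
        exact sum_le_sum_of_subset_of_nonneg
          (by intro t; simp only [mem_insert, mem_Icc]; omega) fun _ _ _ => by positivity
      exact ⟨i.natAbs, by omega⟩
  refine tendsto_atTop_atTop_of_monotone (charge_mono x) fun m => ?_
  obtain ⟨n, hn⟩ := hunbdd m.toNat
  exact ⟨n, by omega⟩

end Charge

def window {s : ℕ} (r : ℕ) (x : ℤ → Fin s) (j : ℤ) : Fin (2 * r + 1) → Fin s :=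
  fun k => x (j - r + (k : ℕ))

lemma window_zero {s : ℕ} (r : ℕ) (x : ℤ → Fin s) (j : ℤ) : window r x j 0 = x (j - r) := by
  simp [window]

def truncBelow {s : ℕ} [NeZero s] (a : ℤ) (x : ℤ → Fin s) : ℤ → Fin s :=
  fun i => if i < a then 0 else x i

lemma truncBelow_of_lt {s : ℕ} [NeZero s] {a i : ℤ} (x : ℤ → Fin s) (h : i < a) :
    truncBelow a x i = 0 :=
  if_pos h

lemma truncBelow_of_le {s : ℕ} [NeZero s] {a i : ℤ} (x : ℤ → Fin s) (h : a ≤ i) :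
    truncBelow a x i = x i :=
  if_neg (not_lt.2 h)

section NuCA

variable {s r : ℕ} {R : Type*} (rule : R → (Fin (2 * r + 1) → Fin s) → Fin s) (θ : ℤ → R)

lemma nuCA_apply_congr {x y : ℤ → Fin s} {c : ℤ}
    (h : ∀ i, c - r ≤ i → i ≤ c + r → x i = y i) :
    nuCA s r rule θ x c = nuCA s r rule θ y c :=
  congrArg (rule (θ c)) (funext fun k => h _ (by omega) (by omega))

variable [NeZero s]

lemma nuCA_apply_eq_zero (h0 : nuCA s r rule θ 0 = 0) {x : ℤ → Fin s} {c : ℤ}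
    (h : ∀ i, c - r ≤ i → i ≤ c + r → x i = 0) : nuCA s r rule θ x c = 0 :=
  (nuCA_apply_congr rule θ h).trans (congrFun h0 c)

noncomputable def flux (x : ℤ → Fin s) (j : ℤ) : ℤ :=
  ∑ c ∈ Ico (j - (2 * r : ℕ)) j, ((nuCA s r rule θ (truncBelow (j - r) x) c : ℕ) : ℤ)

noncomputable def potential (x : ℤ → Fin s) (j : ℤ) : ℤ :=
  flux rule θ x j - ∑ i ∈ Ico (j - r) j, ((x i : ℕ) : ℤ)

def BalanceLaw (x : ℤ → Fin s) (j : ℤ) : Prop :=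
  ((nuCA s r rule θ x j : ℕ) : ℤ) =
    ((x (j - r) : ℕ) : ℤ) + (flux rule θ x (j + 1) - flux rule θ x j)

lemma flux_nonneg (x : ℤ → Fin s) (j : ℤ) : 0 ≤ flux rule θ x j :=
  sum_nonneg fun _ _ => by positivity

lemma flux_le (x : ℤ → Fin s) (j : ℤ) : flux rule θ x j ≤ 2 * r * s := by
  have := sum_Ico_val_le (nuCA s r rule θ (truncBelow (j - r) x)) (a := j - (2 * r : ℕ))
    (b := j) (by omega)
  rw [flux]
  push_cast at this ⊢
  linarith

lemma abs_potential_le (x : ℤ → Fin s) (j : ℤ) : |potential rule θ x j| ≤ 2 * r * s := by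
  have hx := sum_Ico_val_le x (a := j - r) (b := j) (by omega)
  have hx0 : 0 ≤ ∑ i ∈ Ico (j - r) j, ((x i : ℕ) : ℤ) := sum_nonneg fun _ _ => by positivity
  have := flux_nonneg rule θ x j
  have := flux_le rule θ x j
  rw [potential, abs_le]
  constructor <;> linarith

lemma potential_eq_zero (h0 : nuCA s r rule θ 0 = 0) {x : ℤ → Fin s} {j : ℤ}
    (hx : ∀ i, j - r ≤ i → i < j + r → x i = 0) : potential rule θ x j = 0 := by
  have hflux : flux rule θ x j = 0 := by
    refine sum_eq_zero fun c hc => ?_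
    rw [mem_Ico] at hc
    rw [nuCA_apply_eq_zero rule θ h0 fun i hi hi' => ?_, Fin.val_zero, Nat.cast_zero]
    by_cases hij : i < j - r
    · exact truncBelow_of_lt x hij
    · rw [truncBelow_of_le x (by omega)]
      exact hx i (by omega) (by omega)
  rw [potential, hflux, sum_eq_zero fun i hi => by
    rw [mem_Ico] at hi; rw [hx i (by omega) (by omega), Fin.val_zero, Nat.cast_zero]]
  simp

lemma nuCA_zero_of_balanceLaw (h : ∀ j, BalanceLaw rule θ 0 j) : nuCA s r rule θ 0 = 0 := by
  have hflux : ∀ j, flux rule θ 0 j =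
      ∑ c ∈ Ico (j - (2 * r : ℕ)) j, ((nuCA s r rule θ 0 c : ℕ) : ℤ) := fun j => by
    rw [flux, show truncBelow (j - r) (0 : ℤ → Fin s) = 0 from funext fun i => by
      simp [truncBelow]]
  funext c
  have hc := h (c + (2 * r : ℕ))
  have hshift := sum_Ico_add_one_sub_sum_Ico (fun c => ((nuCA s r rule θ 0 c : ℕ) : ℤ))
    (a := c) (b := c + (2 * r : ℕ)) (by omega)
  rw [BalanceLaw, hflux, hflux, show c + (2 * r : ℕ) + 1 - (2 * r : ℕ) = c + 1 by ring,
    add_sub_cancel_right] at hc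
  simp only [Pi.zero_apply, Fin.val_zero, Nat.cast_zero, zero_add] at hc
  refine Fin.ext ?_
  rw [Pi.zero_apply, Fin.val_zero]
  omega

lemma nuCA_apply_eq_add_potential {x : ℤ → Fin s} {j : ℤ} (h : BalanceLaw rule θ x j) :
    ((nuCA s r rule θ x j : ℕ) : ℤ) =
      ((x j : ℕ) : ℤ) + (potential rule θ x (j + 1) - potential rule θ x j) := by
  have hshift := sum_Ico_add_one_sub_sum_Ico (fun i => ((x i : ℕ) : ℤ)) (a := j - r) (b := j)
    (by omega)
  rw [show j - r + 1 = j + 1 - r by ring] at hshift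
  rw [h, potential, potential]
  linarith

lemma charge_nuCA_eq {x : ℤ → Fin s} (h : ∀ j, BalanceLaw rule θ x j) (n : ℕ) :
    charge (nuCA s r rule θ x) n =
      charge x n + potential rule θ x (n + 1) - potential rule θ x (-n) := by
  rw [charge, sum_congr rfl fun c _ => nuCA_apply_eq_add_potential rule θ (h c), sum_add_distrib,
    ← Ico_add_one_right_eq_Icc, sum_Ico_sub_of_le _ (by omega), charge, ← Ico_add_one_right_eq_Icc]
  ring

lemma isNC_of_forall_balanceLaw (h : ∀ x j, BalanceLaw rule θ x j) :
    IsNC s (nuCA s r rule θ) := by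
  have h0 := nuCA_zero_of_balanceLaw rule θ (h 0)
  refine isNC_iff_charge.2 ⟨h0, fun x hx => ?_⟩
  by_cases hfin : ∃ N : ℕ, ∀ i, N < i.natAbs → x i = 0
  · obtain ⟨N, hN⟩ := hfin
    have hvanish : ∀ j : ℤ, N + r < j.natAbs → potential rule θ x j = 0 := fun j hj =>
      potential_eq_zero rule θ h0 fun i hi hi' => hN i (by omega)
    refine tendsto_const_nhds.congr' ?_
    filter_upwards [eventually_charge_pos hx, eventually_gt_atTop (N + r)] with n hpos hn
    rw [charge_nuCA_eq rule θ (h x) n, hvanish (n + 1) (by omega), hvanish (-n) (by omega),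
      sub_zero, add_zero, div_self (by exact_mod_cast hpos.ne')]
  · push Not at hfin
    refine tendsto_div_of_abs_sub_le
      (tendsto_intCast_atTop_atTop.comp (tendsto_charge_atTop hfin)) (4 * r * s) fun n => ?_
    have h1 := abs_potential_le rule θ x (n + 1)
    have h2 := abs_potential_le rule θ x (-n)
    have hdiff : |charge (nuCA s r rule θ x) n - charge x n| ≤ 4 * r * s := by
      rw [charge_nuCA_eq rule θ (h x) n, abs_le]
      rw [abs_le] at h1 h2
      constructor <;> linarith
    exact_mod_cast hdiff

lemma eventually_charge_nuCA_eq (hNC : IsNC s (nuCA s r rule θ)) {x : ℤ → Fin s} {N : ℕ}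
    (hx : ∀ i, N < i.natAbs → x i = 0) :
    ∀ᶠ n in atTop, charge (nuCA s r rule θ x) n = charge x n := by
  by_cases hx0 : x = 0
  · subst hx0
    simp [hNC.1]
  have hHx : ∀ i, N + r < i.natAbs → nuCA s r rule θ x i = 0 := fun i hi =>
    nuCA_apply_eq_zero rule θ hNC.1 fun k hk hk' => hx k (by omega)
  have hconst : ∀ᶠ n in atTop,
      charge (nuCA s r rule θ x) n = charge (nuCA s r rule θ x) (N + r) ∧
        charge x n = charge x N := by
    filter_upwards [eventually_ge_atTop (N + r)] with n hn
    exact ⟨charge_eq_of_le hHx hn, charge_eq_of_le hx (by omega)⟩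
  have hratio : (charge (nuCA s r rule θ x) (N + r) : ℝ) / charge x N = 1 :=
    tendsto_nhds_unique (tendsto_const_nhds.congr' (hconst.mono fun n hn => by rw [hn.1, hn.2]))
      ((isNC_iff_charge.1 hNC).2 x hx0)
  have hden : (charge x N : ℝ) ≠ 0 := fun h => by simp [h] at hratio
  have heq : charge (nuCA s r rule θ x) (N + r) = charge x N := by
    exact_mod_cast (div_eq_one_iff_eq hden).1 hratio
  filter_upwards [hconst] with n hn
  rw [hn.1, hn.2, heq]

lemma eventually_flux_eq (hNC : IsNC s (nuCA s r rule θ)) {x : ℤ → Fin s} {N : ℕ}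
    (hx : ∀ i, N < i.natAbs → x i = 0) (j : ℤ) :
    ∀ᶠ n : ℕ in atTop, flux rule θ x j =
      ∑ i ∈ Icc (j - r) n, ((x i : ℕ) : ℤ) - ∑ c ∈ Icc j n, ((nuCA s r rule θ x c : ℕ) : ℤ) := by
  have hz : ∀ i, N < i.natAbs → truncBelow (j - r) x i = 0 := fun i hi => by
    by_cases hij : i < j - r
    · exact truncBelow_of_lt x hij
    · rw [truncBelow_of_le x (by omega)]
      exact hx i hi
  filter_upwards [eventually_charge_nuCA_eq rule θ hNC hz,
    eventually_ge_atTop (j.natAbs + 2 * r)] with n hn hjn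
  have hcharge : charge (truncBelow (j - r) x) n = ∑ i ∈ Icc (j - r) n, ((x i : ℕ) : ℤ) := by
    rw [charge, ← sum_Ico_add_sum_Icc _ (b := j - r) (by omega) (by omega),
      sum_eq_zero fun i hi => by rw [mem_Ico] at hi; rw [truncBelow_of_lt x hi.2]; rfl, zero_add]
    exact sum_congr rfl fun i hi => by rw [mem_Icc] at hi; rw [truncBelow_of_le x hi.1]
  have hcharge_nuCA : charge (nuCA s r rule θ (truncBelow (j - r) x)) n =
      flux rule θ x j + ∑ c ∈ Icc j n, ((nuCA s r rule θ x c : ℕ) : ℤ) := by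
    rw [charge, ← sum_Ico_add_sum_Icc _ (b := j) (by omega) (by omega)]
    congr 1
    · refine (sum_subset (Ico_subset_Ico (by omega) le_rfl) fun c hc hc' => ?_).symm
      rw [mem_Ico] at hc hc'
      rw [nuCA_apply_eq_zero rule θ hNC.1 fun i _ hi => truncBelow_of_lt x (by omega)]
      rfl
    · refine sum_congr rfl fun c hc => ?_
      rw [mem_Icc] at hc
      rw [nuCA_apply_congr rule θ fun i hi _ => truncBelow_of_le x (by omega)]
  linarith

lemma balanceLaw_of_isNC (hNC : IsNC s (nuCA s r rule θ)) {x : ℤ → Fin s} {N : ℕ}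
    (hx : ∀ i, N < i.natAbs → x i = 0) (j : ℤ) : BalanceLaw rule θ x j := by
  obtain ⟨n, hj, hj1, hn⟩ := ((eventually_flux_eq rule θ hNC hx j).and
    ((eventually_flux_eq rule θ hNC hx (j + 1)).and
      (eventually_ge_atTop (j.natAbs + r + 1)))).exists
  rw [BalanceLaw, hj, hj1, show j + 1 - r = j - r + 1 by ring, Icc_add_one_left_eq_Ioc,
    Icc_add_one_left_eq_Ioc, ← add_sum_Ioc_eq_sum_Icc (by omega : j - r ≤ n),
    ← add_sum_Ioc_eq_sum_Icc (by omega : j ≤ n)]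
  ring

lemma exists_window_eq (u : Fin (2 * r + 1) → Fin s) (j : ℤ) :
    ∃ x : ℤ → Fin s, (∀ i, j.natAbs + r < i.natAbs → x i = 0) ∧ window r x j = u := by
  refine ⟨fun i => if h : j - r ≤ i ∧ i ≤ j + r then u ⟨(i - (j - r)).toNat, by omega⟩ else 0,
    fun i hi => dif_neg (by omega), funext fun k => ?_⟩
  simp only [window]
  rw [dif_pos (by omega)]
  congr
  omega

lemma flux_eq_sum_rule (x : ℤ → Fin s) (j : ℤ) :
    flux rule θ x j = ∑ i : Fin (2 * r),
      ((rule (θ (j - (2 * r : ℕ) + (i : ℕ)))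
        (fun k : Fin (2 * r + 1) => if _ : (k : ℕ) < 2 * r - (i : ℕ) then 0
          else window r x j ⟨(k : ℕ) - (2 * r - (i : ℕ)), (Nat.sub_le _ _).trans_lt k.isLt⟩) :
        ℕ) : ℤ) := by
  rw [flux, show Ico (j - (2 * r : ℕ)) j = Ico (j - (2 * r : ℕ)) (j - (2 * r : ℕ) + (2 * r : ℕ))
    by rw [sub_add_cancel], ← sum_fin_eq_sum_Ico]
  refine sum_congr rfl fun i _ => congrArg (fun v : Fin s => ((v : ℕ) : ℤ))
    (congrArg (rule _) (funext fun k => ?_))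
  simp only [truncBelow, window]
  split_ifs
  · rfl
  · omega
  · omega
  · congr 1
    omega

lemma flux_add_one_eq_sum_rule (x : ℤ → Fin s) (j : ℤ) :
    flux rule θ x (j + 1) = ∑ i : Fin (2 * r),
      ((rule (θ (j - (2 * r : ℕ) + (i : ℕ) + 1))
        (fun k : Fin (2 * r + 1) => if _ : (k : ℕ) < 2 * r - (i : ℕ) then 0
          else window r x j ⟨(k : ℕ) - (2 * r - (i : ℕ)) + 1, by grind⟩) : ℕ) : ℤ) := by
  rw [flux, show Ico (j + 1 - (2 * r : ℕ)) (j + 1) =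
    Ico (j + 1 - (2 * r : ℕ)) (j + 1 - (2 * r : ℕ) + (2 * r : ℕ)) by rw [sub_add_cancel],
    ← sum_fin_eq_sum_Ico]
  refine sum_congr rfl fun i _ => ?_
  rw [show j + 1 - (2 * r : ℕ) + (i : ℕ) = j - (2 * r : ℕ) + (i : ℕ) + 1 by ring]
  refine congrArg (fun v : Fin s => ((v : ℕ) : ℤ)) (congrArg (rule _) (funext fun k => ?_))
  simp only [truncBelow, window]
  split_ifs
  · rfl
  · omega
  · omega
  · congr 1
    omega

end NuCA

/-- `H_θ` is number-conserving iff for every `j ∈ ℤ` the word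
`θ_{[j-2r, j]}` avoids `F_R`, i.e. for every `u ∈ A^{2r+1}`,
`ψ_{2r}(u) = u_0 + Σ_{i=0}^{2r-1} [ψ_{i+1}(0^{2r-i} u_{[1,i+1]}) − ψ_i(0^{2r-i} u_{[0,i]})]`
(computed in `ℤ`), where `ψ_m = θ_{j-2r+m}`. -/
theorem stmt9 (s : ℕ) [NeZero s] (r : ℕ)
    {R : Type*}
    (rule : R → (Fin (2 * r + 1) → Fin s) → Fin s) (θ : ℤ → R) :
    IsNC s (nuCA s r rule θ) ↔
    ∀ j : ℤ, ∀ u : Fin (2 * r + 1) → Fin s,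
      ((rule (θ j) u : ℕ) : ℤ) =
        ((u 0 : ℕ) : ℤ) +
        ∑ i : Fin (2 * r),
          ( ((rule (θ (j - (2 * r : ℕ) + (i : ℕ) + 1))
                (fun k : Fin (2 * r + 1) =>
                  if hk : (k : ℕ) < 2 * r - (i : ℕ) then 0
                  else u ⟨(k : ℕ) - (2 * r - (i : ℕ)) + 1, by
                    have h1 := k.isLt; have h2 := i.isLt; omega⟩) : ℕ) : ℤ)
          - ((rule (θ (j - (2 * r : ℕ) + (i : ℕ)))
                (fun k : Fin (2 * r + 1) =>
                  if hk : (k : ℕ) < 2 * r - (i : ℕ) then 0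
                  else u ⟨(k : ℕ) - (2 * r - (i : ℕ)), by
                    have h1 := k.isLt; omega⟩) : ℕ) : ℤ) ) := by
  
  constructor
  · intro hNC j u
    obtain ⟨x, hx, rfl⟩ := exists_window_eq u j
    rw [sum_sub_distrib, ← flux_eq_sum_rule, ← flux_add_one_eq_sum_rule, window_zero]
    exact balanceLaw_of_isNC rule θ hNC hx j
  · intro h
    refine isNC_of_forall_balanceLaw rule θ fun x j => ?_
    have hj := h j (window r x j)
    rwa [sum_sub_distrib, ← flux_eq_sum_rule, ← flux_add_one_eq_sum_rule, window_zero] at hj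
end

section
/- Let A = {0, 1, …, s-1} with s ≥ 2 and let R be a finite set of local rules on A all of radius r > 0. The set NC(R) = { θ : ℤ → R : H_θ is number-conserving } is a subshift of finite type of R^ℤ: there exists a finite set of forbidden words F ⊆ R^{2r+1} such that θ ∈ NC(R) if and only if no factor θ_{[j, j+2r]} (j ∈ ℤ) belongs to F; in particular NC(R) is closed in the product topology and shift-invariant. -/
open Filter

/-!
A Hattori–Takesue type characterisation: `H_θ` is number-conserving iff at every cell `i`
the local gain `H_θ(x)_i - x_i` is the difference `Φ_i(x) - Φ_{i+1}(x)` of a flow, where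
`Φ_i(x)` is read off from `x_{[i-r, i+r)}` and `θ_{[i-2r, i)}`. Conservation of the total
charge of finite configurations forces this identity (apply it to `x` cut down to
`[i-r, i+r]` and to `[i+1-r, i+r]`), and conversely the identity telescopes, so that
`μ_n(H_θ(x)) - μ_n(x)` stays bounded and vanishes for large `n` when `x` is finite.
The condition at cell `i` only involves `θ_{[i-2r, i]}` and is shift-equivariant, so it is
the membership of that word in a fixed set of allowed words.
-/

namespace NuCA

open Finset

section Window

variable {R : Type*}

def window (n : ℕ) (θ : ℤ → R) (j : ℤ) : Fin n → R := fun m => θ (j + (m : ℕ))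

theorem window_comp_add (n : ℕ) (θ : ℤ → R) (c j : ℤ) :
    window n (fun t => θ (t + c)) j = window n θ (j + c) := by
  funext m
  simp only [window]
  congr 1
  ring

theorem apply_eq_of_window_eq {n : ℕ} {θ θ' : ℤ → R} {j j' : ℤ}
    (h : window n θ j = window n θ' j') {k : ℤ} (hk0 : 0 ≤ k) (hkn : k < n) :
    θ (j + k) = θ' (j' + k) := by
  simpa [window, Int.toNat_of_nonneg hk0] using congrFun h ⟨k.toNat, by omega⟩

theorem isClosed_setOf_forall_window [TopologicalSpace R] [DiscreteTopology R] (n : ℕ)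
    (P : (Fin n → R) → Prop) : IsClosed {θ : ℤ → R | ∀ j, P (window n θ j)} := by
  simp only [Set.ofPred_forall]
  exact isClosed_iInter fun j =>
    (isClosed_discrete {w | P w}).preimage (continuous_pi fun m => continuous_apply _)

theorem image_shift_setOf_forall_window (n : ℕ) (P : (Fin n → R) → Prop) :
    (fun θ : ℤ → R => fun i => θ (i + 1)) '' {θ | ∀ j, P (window n θ j)} =
      {θ | ∀ j, P (window n θ j)} := by
  set shift := fun θ : ℤ → R => fun i => θ (i + 1)
  have hsurj : Function.Surjective shift := fun θ => ⟨fun i => θ (i - 1), by simp [shift]⟩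
  have hpre : shift ⁻¹' {θ | ∀ j, P (window n θ j)} = {θ | ∀ j, P (window n θ j)} := by
    ext θ
    simp only [Set.mem_preimage, Set.mem_ofPred_eq, shift, window_comp_add]
    exact ⟨fun h j => by simpa using h (j - 1), fun h j => h (j + 1)⟩
  rw [← hpre, hsurj.image_preimage, hpre]

end Window

theorem tendsto_div_of_abs_sub_le {a b : ℕ → ℝ} {C : ℝ} (hb : Tendsto b atTop atTop)
    (hab : ∀ n, |a n - b n| ≤ C) : Tendsto (fun n => a n / b n) atTop (nhds 1) := by
  have hequiv : Asymptotics.IsEquivalent atTop a b :=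
    (Asymptotics.IsBigO.of_bound (g := fun _ => (1 : ℝ)) C
      (Eventually.of_forall fun n => by simpa using hab n)).trans_isLittleO
      ((Asymptotics.isLittleO_one_left_iff ℝ).2 (tendsto_norm_atTop_atTop.comp hb))
  exact (Asymptotics.isEquivalent_iff_tendsto_one (hb.eventually_ne_atTop 0)).1 hequiv

section Charge

variable {s : ℕ}

noncomputable def charge (z : ℤ → Fin s) (a b : ℤ) : ℤ := ∑ j ∈ Ico a b, ((z j : ℕ) : ℤ)

theorem charge_zero [NeZero s] (a b : ℤ) : charge (0 : ℤ → Fin s) a b = 0 := by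
  simp [charge]

theorem charge_nonneg (z : ℤ → Fin s) (a b : ℤ) : 0 ≤ charge z a b :=
  sum_nonneg fun _ _ => Int.natCast_nonneg _

theorem charge_le (z : ℤ → Fin s) {a b : ℤ} (hab : a ≤ b) : charge z a b ≤ (b - a) * s := by
  calc charge z a b ≤ ∑ _j ∈ Ico a b, (s : ℤ) :=
        sum_le_sum fun j _ => by exact_mod_cast (z j).isLt.le
    _ = (b - a) * s := by rw [sum_const, Int.card_Ico, nsmul_eq_mul, Int.toNat_of_nonneg (by omega)]

theorem charge_add (z : ℤ → Fin s) {a b c : ℤ} (hab : a ≤ b) (hbc : b ≤ c) :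
    charge z a b + charge z b c = charge z a c := by
  rw [charge, charge, charge, ← Ico_union_Ico_eq_Ico hab hbc,
    sum_union (Ico_disjoint_Ico_consecutive a b c)]

theorem charge_self_add_one (z : ℤ → Fin s) (a : ℤ) : charge z a (a + 1) = (z a : ℕ) := by
  simp [charge, Ico_add_one_right_eq_Icc]

theorem charge_congr {z z' : ℤ → Fin s} {a b : ℤ} (h : ∀ j, a ≤ j → j < b → z j = z' j) :
    charge z a b = charge z' a b :=
  sum_congr rfl fun j hj => by rw [h j (mem_Ico.1 hj).1 (mem_Ico.1 hj).2]

theorem charge_eq_of_subset [NeZero s] (z : ℤ → Fin s) {a b a' b' : ℤ} (ha : a ≤ a') (hb : b' ≤ b)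
    (hz : ∀ j, j < a' ∨ b' ≤ j → z j = 0) : charge z a b = charge z a' b' := by
  refine (sum_subset (Ico_subset_Ico ha hb) fun j _ hj => ?_).symm
  rw [hz j (by simp only [mem_Ico, not_and_or, not_le, not_lt] at hj; omega)]
  simp

theorem charge_pos [NeZero s] (z : ℤ → Fin s) {a b j : ℤ} (haj : a ≤ j) (hjb : j < b)
    (hj : z j ≠ 0) : 0 < charge z a b :=
  calc (0 : ℤ) < (z j : ℕ) := by exact_mod_cast (Fin.pos_iff_ne_zero' _).2 hj
    _ ≤ charge z a b :=
      single_le_sum (f := fun j => ((z j : ℕ) : ℤ)) (fun _ _ => Int.natCast_nonneg _)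
        (mem_Ico.2 ⟨haj, hjb⟩)

theorem charge_comp_add (z : ℤ → Fin s) (a b c : ℤ) :
    charge (fun t => z (t + c)) a b = charge z (a + c) (b + c) :=
  sum_Ico_add' (fun t => ((z t : ℕ) : ℤ)) a b c

theorem sum_Icc_eq_charge (z : ℤ → Fin s) (n : ℕ) :
    ∑ i ∈ Icc (-(n : ℤ)) n, ((z i : ℕ) : ℝ) = charge z (-n) (n + 1) := by
  rw [charge, ← Ico_add_one_right_eq_Icc]
  push_cast
  rfl

theorem support_bounded_or_tendsto_charge [NeZero s] (x : ℤ → Fin s) :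
    (∃ N : ℕ, ∀ t, x t ≠ 0 → t.natAbs ≤ N) ∨
      Tendsto (fun n : ℕ => charge x (-n) (n + 1)) atTop atTop := by
  by_cases hfin : {t | x t ≠ 0}.Finite
  · obtain ⟨N, hN⟩ := (hfin.image Int.natAbs).bddAbove
    exact Or.inl ⟨N, fun t ht => hN ⟨t, ht, rfl⟩⟩
  refine Or.inr (tendsto_atTop.2 fun C => ?_)
  obtain ⟨T, hTsupp, hTcard⟩ := Set.Infinite.exists_subset_card_eq hfin C.toNat
  obtain ⟨N, hN⟩ := (T.finite_toSet.image Int.natAbs).bddAbove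
  refine eventually_atTop.2 ⟨N, fun n hn => ?_⟩
  have hT : T ⊆ Ico (-(n : ℤ)) (n + 1) := fun t ht => by
    have := hN ⟨t, ht, rfl⟩
    simp only [mem_Ico]
    omega
  calc C ≤ ∑ _t ∈ T, (1 : ℤ) := by simp; omega
    _ ≤ ∑ t ∈ T, ((x t : ℕ) : ℤ) := sum_le_sum fun t ht => by
        exact_mod_cast (Fin.pos_iff_ne_zero' _).2 (hTsupp ht)
    _ ≤ charge x (-n) (n + 1) :=
        sum_le_sum_of_subset_of_nonneg hT fun _ _ _ => Int.natCast_nonneg _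

def cutoff [NeZero s] (x : ℤ → Fin s) (a b : ℤ) : ℤ → Fin s :=
  fun t => if a ≤ t ∧ t < b then x t else 0

theorem cutoff_apply_congr [NeZero s] (x : ℤ → Fin s) {a b a' b' t : ℤ}
    (h : a ≤ t ∧ t < b ↔ a' ≤ t ∧ t < b') : cutoff x a b t = cutoff x a' b' t := by
  simp only [cutoff, h]

theorem cutoff_comp_add [NeZero s] (x : ℤ → Fin s) (a b c : ℤ) :
    cutoff (fun t => x (t + c)) a b = fun t => cutoff x (a + c) (b + c) (t + c) := by
  funext t
  simp only [cutoff, add_le_add_iff_right, add_lt_add_iff_right]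

end Charge

section Flow

variable {s r : ℕ} {R : Type*} (rule : R → (Fin (2 * r + 1) → Fin s) → Fin s)

theorem nuCA_congr (θ : ℤ → R) {x x' : ℤ → Fin s} {j : ℤ}
    (h : ∀ t, j - r ≤ t → t ≤ j + r → x t = x' t) :
    nuCA s r rule θ x j = nuCA s r rule θ x' j := by
  simp only [nuCA]
  congr 1
  funext k
  exact h _ (by omega) (by omega)

theorem nuCA_comp_add (θ : ℤ → R) (x : ℤ → Fin s) (c : ℤ) :
    nuCA s r rule (fun t => θ (t + c)) (fun t => x (t + c)) =
      fun j => nuCA s r rule θ x (j + c) := by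
  funext j
  simp only [nuCA]
  congr 2
  funext k
  congr 1
  ring

variable [NeZero s]

theorem nuCA_eq_zero {θ : ℤ → R} {x : ℤ → Fin s} {j : ℤ} (h0 : rule (θ j) 0 = 0)
    (hx : ∀ t, j - r ≤ t → t ≤ j + r → x t = 0) : nuCA s r rule θ x j = 0 :=
  (nuCA_congr rule θ hx).trans h0

/-- The flux from cell `i - 1` into cell `i`. -/
noncomputable def flow (θ : ℤ → R) (i : ℤ) (x : ℤ → Fin s) : ℤ :=
  charge x (i - r) i - charge (nuCA s r rule θ (cutoff x (i - r) (i + r))) (i - 2 * r) i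

def FlowCondition (θ : ℤ → R) (i : ℤ) : Prop :=
  rule (θ i) 0 = 0 ∧ ∀ x : ℤ → Fin s,
    ((nuCA s r rule θ x i : ℕ) : ℤ) - (x i : ℕ) = flow rule θ i x - flow rule θ (i + 1) x

theorem flow_eq_zero {θ : ℤ → R} (h0 : ∀ j, rule (θ j) 0 = 0) {i : ℤ} {x : ℤ → Fin s}
    (hx : ∀ t, i - r ≤ t → t < i + r → x t = 0) : flow rule θ i x = 0 := by
  have hcut : cutoff x (i - r) (i + r) = 0 := funext fun t => by
    by_cases ht : i - r ≤ t ∧ t < i + r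
    exacts [(if_pos ht).trans (hx t ht.1 ht.2), if_neg ht]
  rw [flow, hcut, show nuCA s r rule θ 0 = 0 from funext h0,
    charge_congr (z' := 0) fun t h1 h2 => hx t h1 (by omega), charge_zero, charge_zero, sub_self]

theorem abs_flow_le (θ : ℤ → R) (i : ℤ) (x : ℤ → Fin s) : |flow rule θ i x| ≤ 2 * r * s := by
  set y := nuCA s r rule θ (cutoff x (i - r) (i + r))
  have hx := charge_le x (show i - r ≤ i by omega)
  have hy := charge_le y (show i - 2 * r ≤ i by omega)
  have := charge_nonneg x (i - r) i
  have := charge_nonneg y (i - 2 * r) i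
  have : (0 : ℤ) ≤ r * s := by positivity
  rw [flow, abs_le]
  constructor <;> nlinarith

theorem flow_congr {θ θ' : ℤ → R} {i : ℤ} (h : ∀ j, i - 2 * r ≤ j → j < i → θ j = θ' j)
    (x : ℤ → Fin s) : flow rule θ i x = flow rule θ' i x := by
  have hH (j : ℤ) (h1 : i - 2 * r ≤ j) (h2 : j < i) (y : ℤ → Fin s) :
      nuCA s r rule θ y j = nuCA s r rule θ' y j := by
    simp only [nuCA, h j h1 h2]
  rw [flow, flow, charge_congr fun j h1 h2 => hH j h1 h2 _]

theorem flow_comp_add (θ : ℤ → R) (c i : ℤ) (x : ℤ → Fin s) :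
    flow rule (fun t => θ (t + c)) i (fun t => x (t + c)) = flow rule θ (i + c) x := by
  simp only [flow, cutoff_comp_add, nuCA_comp_add, charge_comp_add]
  ring_nf

theorem flowCondition_congr {θ θ' : ℤ → R} {i : ℤ}
    (h : ∀ j, i - 2 * r ≤ j → j ≤ i → θ j = θ' j) :
    FlowCondition rule θ i ↔ FlowCondition rule θ' i := by
  have hi : θ i = θ' i := h i (by omega) le_rfl
  have hH (x : ℤ → Fin s) : nuCA s r rule θ x i = nuCA s r rule θ' x i := by
    simp only [nuCA, hi]
  have hΦ (x : ℤ → Fin s) : flow rule θ i x = flow rule θ' i x :=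
    flow_congr rule (fun j h1 h2 => h j h1 h2.le) x
  have hΦ' (x : ℤ → Fin s) : flow rule θ (i + 1) x = flow rule θ' (i + 1) x :=
    flow_congr rule (fun j h1 h2 => h j (by omega) (by omega)) x
  simp only [FlowCondition, hi, hH, hΦ, hΦ']

theorem flowCondition_comp_add_iff (θ : ℤ → R) (c i : ℤ) :
    FlowCondition rule (fun t => θ (t + c)) i ↔ FlowCondition rule θ (i + c) := by
  have hsurj : Function.Surjective fun (x : ℤ → Fin s) t => x (t + c) :=
    fun x => ⟨fun t => x (t - c), by simp⟩
  refine and_congr Iff.rfl (hsurj.forall.trans (forall_congr' fun x => ?_))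
  rw [nuCA_comp_add, flow_comp_add, flow_comp_add, add_right_comm]

end Flow

section NumberConserving

variable {s r : ℕ} [NeZero s] {R : Type*} (rule : R → (Fin (2 * r + 1) → Fin s) → Fin s)
  {θ : ℤ → R}

theorem rule_zero_of_isNC (hNC : IsNC s (nuCA s r rule θ)) (j : ℤ) : rule (θ j) 0 = 0 :=
  congrFun hNC.1 j

theorem charge_nuCA_cutoff (hNC : IsNC s (nuCA s r rule θ)) (x : ℤ → Fin s) (a b : ℤ) :
    charge (nuCA s r rule θ (cutoff x a b)) (a - r) (b + r) = charge x a b := by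
  set y := cutoff x a b
  rw [charge_congr (z' := y) fun t h1 h2 => (if_pos ⟨h1, h2⟩).symm]
  by_cases hy : y = 0
  · rw [hy, hNC.1, charge_zero, charge_zero]
  have hy_out (t : ℤ) (ht : t < a ∨ b ≤ t) : y t = 0 := if_neg (by omega)
  have hHy_out (j : ℤ) (hj : j < a - r ∨ b + r ≤ j) : nuCA s r rule θ y j = 0 :=
    nuCA_eq_zero rule (rule_zero_of_isNC rule hNC j) fun t _ _ => hy_out t (by omega)
  have hconst : ∀ n ≥ a.natAbs + b.natAbs + r,
      (∑ i ∈ Icc (-(n : ℤ)) n, ((nuCA s r rule θ y i : ℕ) : ℝ)) /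
        (∑ i ∈ Icc (-(n : ℤ)) n, ((y i : ℕ) : ℝ)) =
      (charge (nuCA s r rule θ y) (a - r) (b + r) : ℝ) / (charge y a b : ℝ) := by
    intro n hn
    rw [sum_Icc_eq_charge, sum_Icc_eq_charge,
      charge_eq_of_subset _ (by omega) (by omega) hHy_out,
      charge_eq_of_subset _ (by omega) (by omega) hy_out]
  have hratio := tendsto_nhds_unique
    ((hNC.2 y hy).congr' (eventually_atTop.2 ⟨_, hconst⟩)) tendsto_const_nhds
  -- a vanishing denominator would make the ratio `0` rather than `1`
  have hB : (charge y a b : ℝ) ≠ 0 := fun h => by simp [h] at hratio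
  exact_mod_cast ((div_eq_one_iff_eq hB).1 hratio.symm)

theorem flowCondition_of_isNC (hNC : IsNC s (nuCA s r rule θ)) (i : ℤ) :
    FlowCondition rule θ i := by
  refine ⟨rule_zero_of_isNC rule hNC i, fun x => ?_⟩
  set H := nuCA s r rule θ
  set y := cutoff x (i - r) (i + 1 + r)
  set x' := cutoff x (i - r) (i + r)
  set x'' := cutoff x (i + 1 - r) (i + 1 + r)
  have hy := charge_nuCA_cutoff rule hNC x (i - r) (i + 1 + r)
  have hx'' := charge_nuCA_cutoff rule hNC x (i + 1 - r) (i + 1 + r)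
  rw [show i - r - r = i - 2 * r by ring, show i + 1 + r + r = i + 1 + 2 * r by ring] at hy
  rw [show i + 1 - r - r = i + 1 - 2 * r by ring, show i + 1 + r + r = i + 1 + 2 * r by ring]
    at hx''
  have hleft : charge (H y) (i - 2 * r) i = charge (H x') (i - 2 * r) i :=
    charge_congr fun j _ hj => nuCA_congr rule θ fun t _ _ => cutoff_apply_congr x (by omega)
  have hright : charge (H y) (i + 1) (i + 1 + 2 * r) = charge (H x'') (i + 1) (i + 1 + 2 * r) :=
    charge_congr fun j hj _ => nuCA_congr rule θ fun t _ _ => cutoff_apply_congr x (by omega)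
  have hcenter : H y i = H x i := nuCA_congr rule θ fun t h1 h2 => if_pos ⟨h1, by omega⟩
  have := charge_add (H y) (show i - 2 * r ≤ i by omega) (show i ≤ i + 1 + 2 * r by omega)
  have := charge_add (H y) (show i ≤ i + 1 by omega) (show i + 1 ≤ i + 1 + 2 * r by omega)
  have := charge_add (H x'') (show i + 1 - 2 * r ≤ i + 1 by omega)
    (show i + 1 ≤ i + 1 + 2 * r by omega)
  have := charge_add x (show i - r ≤ i by omega) (show i ≤ i + 1 + r by omega)
  have := charge_add x (show i ≤ i + 1 by omega) (show i + 1 ≤ i + 1 + r by omega)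
  have := charge_add x (show i + 1 - r ≤ i + 1 by omega) (show i + 1 ≤ i + 1 + r by omega)
  have := charge_self_add_one (H y) i
  have := charge_self_add_one x i
  rw [flow, flow, hcenter] at *
  linarith

theorem charge_nuCA_sub_charge (h : ∀ i, FlowCondition rule θ i) (x : ℤ → Fin s) {a b : ℤ}
    (hab : a ≤ b) :
    charge (nuCA s r rule θ x) a b - charge x a b = flow rule θ a x - flow rule θ b x := by
  induction b, hab using Int.leInduction with
  | base => simp [charge]
  | succ b hab ih =>
    rw [← charge_add _ hab (Int.le_add_one le_rfl), ← charge_add x hab (Int.le_add_one le_rfl),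
      charge_self_add_one, charge_self_add_one]
    linarith [(h b).2 x]

theorem isNC_of_forall_flowCondition (h : ∀ i, FlowCondition rule θ i) :
    IsNC s (nuCA s r rule θ) := by
  refine ⟨funext fun j => (h j).1, fun x hx => ?_⟩
  have hdiff (n : ℕ) := charge_nuCA_sub_charge rule h x (show -(n : ℤ) ≤ n + 1 by omega)
  simp only [sum_Icc_eq_charge]
  rcases support_bounded_or_tendsto_charge x with ⟨N, hN⟩ | htop
  · obtain ⟨j, hj⟩ := Function.ne_iff.1 hx
    have hx_out (t : ℤ) (ht : N < t.natAbs) : x t = 0 := by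
      by_contra hxt
      exact absurd (hN t hxt) (by omega)
    have h0 (j : ℤ) : rule (θ j) 0 = 0 := (h j).1
    refine tendsto_const_nhds.congr' (eventually_atTop.2 ⟨N + r, fun n hn => ?_⟩)
    have hflow_left := flow_eq_zero rule h0 (i := -n) fun t _ _ => hx_out t (by omega)
    have hflow_right := flow_eq_zero rule h0 (i := n + 1) fun t _ _ => hx_out t (by omega)
    have hjN := hN j hj
    have hpos := charge_pos x (show -(n : ℤ) ≤ j by omega) (show j < n + 1 by omega) hj
    have := hdiff n
    rw [eq_comm, div_eq_one_iff_eq (by positivity)]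
    exact congrArg (fun z : ℤ => (z : ℝ)) (by linarith)
  · refine tendsto_div_of_abs_sub_le (C := 4 * r * s) (tendsto_intCast_atTop_atTop.comp htop)
      fun n => ?_
    have := abs_flow_le rule θ (-n) x
    have := abs_flow_le rule θ (n + 1) x
    have hbound : |charge (nuCA s r rule θ x) (-n) (n + 1) - charge x (-n) (n + 1)| ≤ 4 * r * s := by
      rw [hdiff n]
      exact (abs_sub _ _).trans (by linarith)
    rw [← Int.cast_sub, ← Int.cast_abs]
    exact_mod_cast hbound

theorem isNC_iff_forall_flowCondition :
    IsNC s (nuCA s r rule θ) ↔ ∀ i, FlowCondition rule θ i :=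
  ⟨flowCondition_of_isNC rule, isNC_of_forall_flowCondition rule⟩

def IsGoodWord (w : Fin (2 * r + 1) → R) : Prop :=
  ∀ θ : ℤ → R, window (2 * r + 1) θ 0 = w → FlowCondition rule θ (2 * r)

theorem flowCondition_iff_isGoodWord (θ : ℤ → R) (j : ℤ) :
    FlowCondition rule θ (j + 2 * r) ↔ IsGoodWord rule (window (2 * r + 1) θ j) := by
  have hcomp {θ' : ℤ → R} (hw : window (2 * r + 1) θ' 0 = window (2 * r + 1) θ j) :
      FlowCondition rule θ' (2 * r) ↔ FlowCondition rule θ (j + 2 * r) := by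
    rw [add_comm, ← flowCondition_comp_add_iff]
    refine flowCondition_congr rule fun t h1 h2 => ?_
    simpa [add_comm] using apply_eq_of_window_eq hw (by omega) (show t < ↑(2 * r + 1) by omega)
  have hwin : window (2 * r + 1) (fun t => θ (t + j)) 0 = window (2 * r + 1) θ j := by
    rw [window_comp_add, zero_add]
  exact ⟨fun h θ' hw => (hcomp hw).2 h, fun h => (hcomp hwin).1 (h _ hwin)⟩

theorem isNC_iff_forall_isGoodWord :
    IsNC s (nuCA s r rule θ) ↔ ∀ j, IsGoodWord rule (window (2 * r + 1) θ j) := by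
  rw [isNC_iff_forall_flowCondition]
  refine ⟨fun h j => (flowCondition_iff_isGoodWord rule θ j).1 (h _), fun h i => ?_⟩
  simpa using (flowCondition_iff_isGoodWord rule θ (i - 2 * r)).2 (h _)

end NumberConserving

end NuCA

theorem stmt10_general (s : ℕ) [NeZero s] (r : ℕ)
    {R : Type*} [Fintype R] [TopologicalSpace R] [DiscreteTopology R]
    (rule : R → (Fin (2 * r + 1) → Fin s) → Fin s) :
    (∃ F : Set (Fin (2 * r + 1) → R), F.Finite ∧
      ∀ θ : ℤ → R, IsNC s (nuCA s r rule θ) ↔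
        ∀ j : ℤ, (fun m : Fin (2 * r + 1) => θ (j + (m : ℕ))) ∉ F)
    ∧ IsClosed {θ : ℤ → R | IsNC s (nuCA s r rule θ)}
    ∧ (fun θ : ℤ → R => fun i : ℤ => θ (i + 1)) ''
          {θ : ℤ → R | IsNC s (nuCA s r rule θ)}
        = {θ : ℤ → R | IsNC s (nuCA s r rule θ)} := by
  have hNC : {θ : ℤ → R | IsNC s (nuCA s r rule θ)} =
      {θ | ∀ j, NuCA.IsGoodWord rule (NuCA.window (2 * r + 1) θ j)} :=
    Set.ext fun θ => NuCA.isNC_iff_forall_isGoodWord rule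
  refine ⟨⟨{w | ¬ NuCA.IsGoodWord rule w}, Set.toFinite _, fun θ => ?_⟩, ?_, ?_⟩
  · simp only [Set.mem_ofPred_eq, not_not]
    exact NuCA.isNC_iff_forall_isGoodWord rule
  · exact hNC ▸ NuCA.isClosed_setOf_forall_window _ _
  · exact hNC ▸ NuCA.image_shift_setOf_forall_window _ _

/-- `NC(R) = {θ : H_θ is number-conserving}` is a subshift of finite
type of `R^ℤ`: there is a finite set `F` of forbidden words of length `2r+1` such
that `θ ∈ NC(R)` iff no factor `θ_{[j, j+2r]}` belongs to `F`; in particular `NC(R)`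
is closed for the product topology and shift-invariant. -/
theorem stmt10 (s : ℕ) [NeZero s] (hs : 2 ≤ s) (r : ℕ) (hr : 0 < r)
    {R : Type*} [Fintype R] [TopologicalSpace R] [DiscreteTopology R]
    (rule : R → (Fin (2 * r + 1) → Fin s) → Fin s) :
    (∃ F : Set (Fin (2 * r + 1) → R), F.Finite ∧
      ∀ θ : ℤ → R, IsNC s (nuCA s r rule θ) ↔
        ∀ j : ℤ, (fun m : Fin (2 * r + 1) => θ (j + (m : ℕ))) ∉ F)
    ∧ IsClosed {θ : ℤ → R | IsNC s (nuCA s r rule θ)}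
    ∧ (fun θ : ℤ → R => fun i : ℤ => θ (i + 1)) ''
          {θ : ℤ → R | IsNC s (nuCA s r rule θ)}
        = {θ : ℤ → R | IsNC s (nuCA s r rule θ)} :=
  stmt10_general s r rule
end
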